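/- arXiv:1006.4873 — 4 statements merged into one kernel-verified Lean document; each statement's English description precedes it below -/
import Mathlib

section
/- Let S be a Hausdorff semitopological semigroup with the FS-property. If the topological space S has at least one isolated point, then S is discrete. -/
/-!
Given an isolated point `t` and any `b`, the `S`-property gives `c, d ∈ S¹` with `c·b·d = t`.
The map `x ↦ c·x·d` is continuous by separate continuity and has finite fibres by the
`F`-property, so the preimage of `{t}` is a finite open neighbourhood of `b`; in a `T₁` space
this forces `{b}` to be open.
-/

/-- A semigroup `S` has the `S`-property if for all `a, b ∈ S` there are
`c, d ∈ S¹` with `c·a·d = b`. -/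
def SProperty (S : Type*) [Semigroup S] : Prop :=
  ∀ a b : S, ∃ c d : WithOne S, c * (a : WithOne S) * d = (b : WithOne S)

/-- A semigroup `S` has the `F`-property if for all `a, b, c, d ∈ S¹` the
sets `{x ∈ S | a·x = b}` and `{x ∈ S | x·c = d}` are finite. -/
def FProperty (S : Type*) [Semigroup S] : Prop :=
  (∀ a b : WithOne S, {x : S | a * (x : WithOne S) = b}.Finite) ∧
  (∀ c d : WithOne S, {x : S | (x : WithOne S) * c = d}.Finite)

section

variable {S : Type*} [Semigroup S]

lemma WithOne.exists_continuous_mul_left_eq [TopologicalSpace S]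
    (hl : ∀ a : S, Continuous fun x : S => a * x) (c : WithOne S) :
    ∃ f : S → S, Continuous f ∧ ∀ x : S, c * (x : WithOne S) = f x := by
  induction c using WithOne.recOneCoe with
  | one => exact ⟨id, continuous_id, fun x => one_mul _⟩
  | coe c => exact ⟨(c * ·), hl c, fun x => (WithOne.coe_mul c x).symm⟩

lemma WithOne.exists_continuous_mul_right_eq [TopologicalSpace S]
    (hr : ∀ a : S, Continuous fun x : S => x * a) (d : WithOne S) :
    ∃ f : S → S, Continuous f ∧ ∀ x : S, (x : WithOne S) * d = f x := by
  induction d using WithOne.recOneCoe with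
  | one => exact ⟨id, continuous_id, fun x => mul_one _⟩
  | coe d => exact ⟨(· * d), hr d, fun x => (WithOne.coe_mul x d).symm⟩

namespace FProperty

variable (hF : FProperty S)
include hF

lemma finite_preimage_of_mul_left_eq {c : WithOne S} {f : S → S}
    (hf : ∀ x : S, c * (x : WithOne S) = f x) (y : S) : (f ⁻¹' {y}).Finite :=
  (hF.1 c y).subset fun x (hx : f x = y) => by simp only [Set.mem_ofPred_eq, hf, hx]

lemma finite_preimage_of_mul_right_eq {d : WithOne S} {f : S → S}
    (hf : ∀ x : S, (x : WithOne S) * d = f x) (y : S) : (f ⁻¹' {y}).Finite :=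
  (hF.2 d y).subset fun x (hx : f x = y) => by simp only [Set.mem_ofPred_eq, hf, hx]

end FProperty

end

/-- A Hausdorff semitopological semigroup with the `FS`-property having an
isolated point is discrete. -/
theorem discrete_of_isolated_point {S : Type*} [Semigroup S]
    [TopologicalSpace S] [T2Space S]
    (hl : ∀ a : S, Continuous fun x : S => a * x)
    (hr : ∀ a : S, Continuous fun x : S => x * a)
    (hS : SProperty S) (hF : FProperty S)
    (hiso : ∃ t : S, IsOpen ({t} : Set S)) :
    DiscreteTopology S := by
  obtain ⟨t, ht⟩ := hiso
  refine discreteTopology_iff_isOpen_singleton.mpr fun b => ?_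
  obtain ⟨c, d, hcd⟩ := hS b t
  obtain ⟨f, hf_cont, hf⟩ := WithOne.exists_continuous_mul_left_eq hl c
  obtain ⟨g, hg_cont, hg⟩ := WithOne.exists_continuous_mul_right_eq hr d
  have hb : g (f b) = t := WithOne.coe_inj.mp (by rw [← hg, ← hf, hcd])
  have hopen : IsOpen ((g ∘ f) ⁻¹' {t}) := ht.preimage (hg_cont.comp hf_cont)
  have hfinite : ((g ∘ f) ⁻¹' {t}).Finite :=
    (hF.finite_preimage_of_mul_right_eq hg t).preimage' fun y _ =>
      hF.finite_preimage_of_mul_left_eq hf y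
  exact isOpen_singleton_of_finite_mem_nhds b (hopen.mem_nhds hb) hfinite
end

section
/- Let S be a countable semigroup with the FS-property. Then every topology τ on S such that (S, τ) is a Hausdorff semitopological semigroup and (S, τ) is a Baire space is the discrete topology. -/
/-!
A countable Hausdorff Baire space is a countable union of closed singletons, so some singleton
`{a}` has nonempty interior, i.e. `a` is isolated. Given any `b`, the `S`-property gives
`c, d ∈ S¹` with `c * b * d = a`; the set of solutions of `c * x * d = a` is open by separate
continuity and finite by the `F`-property, so `b` has a finite neighbourhood and is isolated too.
-/

theorem exists_isOpen_singleton_of_countable {X : Type*} [TopologicalSpace X] [T1Space X]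
    [BaireSpace X] [Countable X] [Nonempty X] : ∃ a : X, IsOpen ({a} : Set X) := by
  obtain ⟨a, y, hy⟩ := nonempty_interior_of_iUnion_of_closed (fun _ => isClosed_singleton)
    (Set.iUnion_of_singleton X)
  obtain rfl := Set.mem_singleton_iff.mp (interior_subset hy)
  exact ⟨y, subset_interior_iff_isOpen.mp (Set.singleton_subset_iff.mpr hy)⟩

namespace WithOne

variable {S : Type*} [Semigroup S]

def mulLeft (c : WithOne S) (x : S) : S :=
  WithOne.recOneCoe (motive := fun _ => S) x (· * x) c

def mulRight (d : WithOne S) (x : S) : S :=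
  WithOne.recOneCoe (motive := fun _ => S) x (x * ·) d

@[simp]
theorem coe_mulLeft (c : WithOne S) (x : S) : ((mulLeft c x : S) : WithOne S) = c * x := by
  cases c
  exacts [(one_mul _).symm, WithOne.coe_mul _ _]

@[simp]
theorem coe_mulRight (d : WithOne S) (x : S) : ((mulRight d x : S) : WithOne S) = x * d := by
  cases d
  exacts [(mul_one _).symm, WithOne.coe_mul _ _]

theorem continuous_mulLeft [TopologicalSpace S] (hl : ∀ a : S, Continuous fun x : S => a * x)
    (c : WithOne S) : Continuous (mulLeft c) := by
  cases c
  · exact continuous_id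
  · exact hl _

theorem continuous_mulRight [TopologicalSpace S] (hr : ∀ a : S, Continuous fun x : S => x * a)
    (d : WithOne S) : Continuous (mulRight d) := by
  cases d
  · exact continuous_id
  · exact hr _

end WithOne

namespace FProperty

variable {S : Type*} [Semigroup S]

theorem finite_preimage_mulLeft (hF : FProperty S) (c : WithOne S) (y : S) :
    (WithOne.mulLeft c ⁻¹' {y}).Finite := by
  convert hF.1 c y using 1
  ext x
  rw [Set.mem_ofPred_eq, ← WithOne.coe_mulLeft, WithOne.coe_inj]
  rfl

theorem finite_preimage_mulRight (hF : FProperty S) (d : WithOne S) (y : S) :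
    (WithOne.mulRight d ⁻¹' {y}).Finite := by
  convert hF.2 d y using 1
  ext x
  rw [Set.mem_ofPred_eq, ← WithOne.coe_mulRight, WithOne.coe_inj]
  rfl

end FProperty

theorem isOpen_singleton_of_isOpen_singleton {S : Type*} [Semigroup S] [TopologicalSpace S]
    [T1Space S] (hl : ∀ a : S, Continuous fun x : S => a * x)
    (hr : ∀ a : S, Continuous fun x : S => x * a) (hS : SProperty S) (hF : FProperty S)
    {a : S} (ha : IsOpen ({a} : Set S)) (b : S) : IsOpen ({b} : Set S) := by
  obtain ⟨c, d, hcd⟩ := hS b a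
  set U := WithOne.mulLeft c ⁻¹' (WithOne.mulRight d ⁻¹' {a})
  have hU_open : IsOpen U :=
    (ha.preimage (WithOne.continuous_mulRight hr d)).preimage (WithOne.continuous_mulLeft hl c)
  have hbU : b ∈ U := WithOne.coe_inj.mp <| by
    rw [WithOne.coe_mulRight, WithOne.coe_mulLeft, hcd]
  have hU_finite : U.Finite :=
    (hF.finite_preimage_mulRight d a).preimage' fun y _ => hF.finite_preimage_mulLeft c y
  exact isOpen_singleton_of_finite_mem_nhds b (hU_open.mem_nhds hbU) hU_finite

/-- Every Hausdorff Baire topology on a countable semigroup with the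
`FS`-property for which multiplication is separately continuous is
discrete. -/
theorem discrete_of_countable_Baire {S : Type*} [Semigroup S] [Countable S]
    [TopologicalSpace S] [T2Space S] [BaireSpace S]
    (hl : ∀ a : S, Continuous fun x : S => a * x)
    (hr : ∀ a : S, Continuous fun x : S => x * a)
    (hS : SProperty S) (hF : FProperty S) :
    DiscreteTopology S := by
  refine discreteTopology_iff_isOpen_singleton.mpr fun b => ?_
  have : Nonempty S := ⟨b⟩
  obtain ⟨a, ha⟩ := exists_isOpen_singleton_of_countable (X := S)
  exact isOpen_singleton_of_isOpen_singleton hl hr hS hF ha b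
end

section
/- Let S be a countable semilattice (a commutative semigroup in which every element is idempotent) with the F-property, equipped with a topology τ such that (S, τ) is a Hausdorff semitopological semigroup and for every s ∈ S at least one of the principal ideals s·S and S·s is a Baire space in the subspace topology. Then τ is the discrete topology. -/
/-!
Fix `s`. The ideal `I = s·S` is a countable Baire space, so it has an isolated point `x₀`, and
`s·x₀ = x₀`. Left translation by `s` maps `S` into `I`, so the fibre `{y | s·y = x₀}` is open;
by the `F`-property it is finite, hence its point `x₀` is isolated in `S`. Repeating the argument
with the open fibre `{y | x₀·y = x₀}`, which contains `s`, shows that `s` is isolated.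
-/

open Set

theorem FProperty.finite_setOf_mul_left_eq {S : Type*} [Semigroup S] (hF : FProperty S)
    (a b : S) : {x : S | a * x = b}.Finite := by
  simpa only [← WithOne.coe_mul, WithOne.coe_inj] using hF.1 a b

theorem exists_isOpen_singleton_of_baireSpace (X : Type*) [TopologicalSpace X] [T1Space X]
    [BaireSpace X] [Countable X] [Nonempty X] : ∃ x : X, IsOpen ({x} : Set X) := by
  obtain ⟨x, y, hy⟩ := nonempty_interior_of_iUnion_of_closed (f := fun x : X => {x})
    (fun _ => isClosed_singleton) (iUnion_of_singleton X)
  rw [eq_of_mem_singleton (interior_subset hy)] at hy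
  exact ⟨x, isOpen_singleton_of_finite_mem_nhds x (mem_interior_iff_mem_nhds.1 hy)
    (finite_singleton x)⟩

theorem isOpen_singleton_of_finite_fiber {X Y : Type*} [TopologicalSpace X] [T1Space X]
    [TopologicalSpace Y] {f : X → Y} (hf : Continuous f) {x : X} {y : Y} (hx : f x = y)
    (hy : IsOpen ({y} : Set Y)) (hfin : (f ⁻¹' {y}).Finite) : IsOpen ({x} : Set X) :=
  isOpen_singleton_of_finite_mem_nhds x ((hy.preimage hf).mem_nhds hx) hfin

theorem discrete_semilattice_of_I_Baire_general {S : Type*} [CommSemigroup S]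
    [Countable S] [TopologicalSpace S] [T2Space S]
    (hidem : ∀ x : S, x * x = x)
    (hl : ∀ a : S, Continuous fun x : S => a * x)
    (hF : FProperty S)
    (hBaire : ∀ s : S,
      BaireSpace {x : S | ∃ t : S, s * t = x} ∨
      BaireSpace {x : S | ∃ t : S, t * s = x}) :
    DiscreteTopology S := by
  refine discreteTopology_iff_isOpen_singleton.2 fun s => ?_
  set I : Set S := range (s * ·)
  have hI : {x : S | ∃ t : S, t * s = x} = I := by simp only [I, range, mul_comm]
  have : BaireSpace I := (hBaire s).elim id (hI ▸ ·)
  have : Nonempty I := ⟨⟨s * s, s, rfl⟩⟩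
  obtain ⟨x₀, hx₀⟩ := exists_isOpen_singleton_of_baireSpace I
  have hsx₀ : s * x₀ = x₀ := by
    obtain ⟨t, ht⟩ := x₀.2
    rw [← ht, ← mul_assoc, hidem]
  have hx₀S : IsOpen ({(x₀ : S)} : Set S) := by
    refine isOpen_singleton_of_finite_fiber ((hl s).codRestrict fun t => mem_range_self t)
      (Subtype.ext hsx₀) hx₀ ?_
    simpa only [preimage, mem_singleton_iff, Subtype.ext_iff, val_codRestrict_apply] using
      hF.finite_setOf_mul_left_eq s x₀
  exact isOpen_singleton_of_finite_fiber (hl x₀) (by rw [mul_comm, hsx₀]) hx₀S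
    (hF.finite_setOf_mul_left_eq x₀ x₀)

/-- A countable Hausdorff semitopological semilattice with the `F`-property
in which, for every `s`, one of the principal ideals `s·S`, `S·s` is a Baire
space, is discrete. -/
theorem discrete_semilattice_of_I_Baire {S : Type*} [CommSemigroup S]
    [Countable S] [TopologicalSpace S] [T2Space S]
    (hidem : ∀ x : S, x * x = x)
    (hl : ∀ a : S, Continuous fun x : S => a * x)
    (hr : ∀ a : S, Continuous fun x : S => x * a)
    (hF : FProperty S)
    (hBaire : ∀ s : S,
      BaireSpace {x : S | ∃ t : S, s * t = x} ∨
      BaireSpace {x : S | ∃ t : S, t * s = x}) :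
    DiscreteTopology S :=
  discrete_semilattice_of_I_Baire_general hidem hl hF hBaire
end

section
/- Let S be a Hausdorff topological semigroup (multiplication jointly continuous) containing a dense discrete subspace A such that for all a, b ∈ A the sets {x ∈ A : a·x = b} and {y ∈ A : y·a = b} are finite. Then I = S \ A is a two-sided ideal of S (provided it is nonempty): S·I ⊆ I, I·S ⊆ I. -/
/-!
Points of a dense discrete subspace `A` are isolated in `S`. If `s * x = b ∈ A`, continuity of
multiplication at `(s, x)` gives neighbourhoods `U ∋ s`, `V ∋ x` with `U * V = {b}`; choosing
`a ∈ A ∩ U`, the trace `V ∩ A` lies in the finite set `{w ∈ A | a * w = b}`. As `x` is in the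
closure of `V ∩ A` and finite sets are closed, `x ∈ A`. The case `x * s` is the same argument for
the reversed multiplication.
-/

open Set

section

variable {X Y Z : Type*} [TopologicalSpace X] [TopologicalSpace Y] [TopologicalSpace Z]

theorem Dense.isOpen_singleton_of_inter_eq [T1Space X] {A U : Set X} {a : X} (hA : Dense A)
    (hU : IsOpen U) (hUA : U ∩ A = {a}) : IsOpen ({a} : Set X) := by
  have haU : a ∈ U := (hUA.symm ▸ mem_singleton a : a ∈ U ∩ A).1
  have hUsub : U ⊆ {a} := by
    simpa [hUA] using hA.open_subset_closure_inter hU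
  rwa [Subset.antisymm hUsub (singleton_subset_iff.2 haU)] at hU

theorem mem_of_isOpen_singleton_of_finite_fibers [T1Space Y] {f : X → Y → Z}
    (hf : Continuous (Function.uncurry f)) {A : Set X} (hA : Dense A) {B : Set Y} (hB : Dense B)
    {s : X} {y : Y} (hopen : IsOpen ({f s y} : Set Z))
    (hfin : ∀ a ∈ A, {x ∈ B | f a x = f s y}.Finite) : y ∈ B := by
  obtain ⟨U, V, hU, hV, hsU, hyV, hUV⟩ :=
    isOpen_prod_iff.1 (hopen.preimage hf) s y rfl
  obtain ⟨a, haU, haA⟩ := hA.inter_open_nonempty U hU ⟨s, hsU⟩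
  have hVB : V ∩ B ⊆ {x ∈ B | f a x = f s y} := fun x ⟨hxV, hxB⟩ =>
    ⟨hxB, hUV (mk_mem_prod haU hxV)⟩
  have hy : y ∈ closure {x ∈ B | f a x = f s y} :=
    closure_mono hVB (hB.open_subset_closure_inter hV hyV)
  rw [(hfin a haA).isClosed.closure_eq] at hy
  exact hy.1

end

/-- If a Hausdorff topological semigroup `S` contains a dense discrete
subspace `A` such that for all `a, b ∈ A` the equations `a·x = b` and
`y·a = b` have only finitely many solutions in `A`, then the complement
`I = S \ A` is a two-sided ideal of `S`. -/
theorem complement_of_dense_discrete_is_ideal {S : Type*} [Semigroup S]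
    [TopologicalSpace S] [T2Space S]
    (hc : Continuous fun p : S × S => p.1 * p.2)
    (A : Set S) (hdense : Dense A)
    (hdisc : ∀ a ∈ A, ∃ U : Set S, IsOpen U ∧ U ∩ A = {a})
    (hfin : ∀ a ∈ A, ∀ b ∈ A,
      {x ∈ A | a * x = b}.Finite ∧ {y ∈ A | y * a = b}.Finite) :
    ∀ x ∈ Aᶜ, ∀ s : S, s * x ∈ Aᶜ ∧ x * s ∈ Aᶜ := by
  have hiso : ∀ b ∈ A, IsOpen ({b} : Set S) := fun b hb => by
    obtain ⟨U, hU, hUA⟩ := hdisc b hb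
    exact hdense.isOpen_singleton_of_inter_eq hU hUA
  intro x hx s
  constructor
  · intro hsx
    exact hx <| mem_of_isOpen_singleton_of_finite_fibers (f := fun a w => a * w) hc
      hdense hdense (hiso _ hsx) fun a ha => (hfin a ha _ hsx).1
  · intro hxs
    exact hx <| mem_of_isOpen_singleton_of_finite_fibers (f := fun a w => w * a)
      (hc.comp continuous_swap) hdense hdense (hiso _ hxs) fun a ha => (hfin a ha _ hxs).2
end
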